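/- arXiv:1707.09604 — 8 statements merged into one kernel-verified Lean document; each statement's English description precedes it below -/
import Mathlib

section
/- Let (Z, 𝒵, ν) be a σ-finite measure space with ν ≠ 0 and let {S_z : z ∈ Z} be a family of strictly F-consistent scoring functions for a functional T such that for all x ∈ A and F ∈ F the map (z,y) ↦ S_z(x,y) is ν ⊗ F-integrable. Then S*(x,y) := ∫_Z S_z(x,y) dν(z) is again a strictly F-consistent scoring function for T. -/
open MeasureTheory

/-- A mixture (integral over a family) of strictly consistent scoring functions is
strictly consistent. -/
theorem strictly_consistent_integral_family {O Z : Type*} [MeasurableSpace O]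
    [MeasurableSpace Z] {k : ℕ}
    (ν : Measure Z) [SigmaFinite ν] (hν : ν ≠ 0)
    (𝓕 : Set (Measure O)) (hprob : ∀ F ∈ 𝓕, IsProbabilityMeasure F)
    (A : Set (Fin k → ℝ))
    (T : Measure O → (Fin k → ℝ)) (hTA : ∀ F ∈ 𝓕, T F ∈ A)
    (S : Z → (Fin k → ℝ) → O → ℝ)
    (hcons : ∀ z : Z, ∀ x ∈ A, ∀ F ∈ 𝓕, ∫ y, S z (T F) y ∂F ≤ ∫ y, S z x y ∂F)
    (hstrict : ∀ z : Z, ∀ x ∈ A, ∀ F ∈ 𝓕,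
        ∫ y, S z x y ∂F = ∫ y, S z (T F) y ∂F → x = T F)
    (hint : ∀ x ∈ A, ∀ F ∈ 𝓕, Integrable (fun p : Z × O => S p.1 x p.2) (ν.prod F)) :
    (∀ x ∈ A, ∀ F ∈ 𝓕,
        ∫ y, (∫ z, S z (T F) y ∂ν) ∂F ≤ ∫ y, (∫ z, S z x y ∂ν) ∂F) ∧
    (∀ x ∈ A, ∀ F ∈ 𝓕,
        ∫ y, (∫ z, S z x y ∂ν) ∂F = ∫ y, (∫ z, S z (T F) y ∂ν) ∂F → x = T F) := by
  have swap : ∀ x ∈ A, ∀ F ∈ 𝓕,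
      ∫ y, (∫ z, S z x y ∂ν) ∂F = ∫ z, (∫ y, S z x y ∂F) ∂ν := by
    intro x hx F hF
    haveI := hprob F hF
    exact (integral_integral_swap (hint x hx F hF)).symm
  have gint : ∀ x ∈ A, ∀ F ∈ 𝓕, Integrable (fun z => ∫ y, S z x y ∂F) ν := by
    intro x hx F hF
    haveI := hprob F hF
    exact (hint x hx F hF).integral_prod_left
  have key : ∀ x ∈ A, ∀ F ∈ 𝓕,
      ∫ z, (∫ y, S z (T F) y ∂F) ∂ν ≤ ∫ z, (∫ y, S z x y ∂F) ∂ν := by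
    intro x hx F hF
    exact integral_mono (gint (T F) (hTA F hF) F hF) (gint x hx F hF)
      (fun z => hcons z x hx F hF)
  constructor
  · intro x hx F hF
    rw [swap x hx F hF, swap (T F) (hTA F hF) F hF]
    exact key x hx F hF
  · intro x hx F hF heq
    rw [swap x hx F hF, swap (T F) (hTA F hF) F hF] at heq
    set g : Z → ℝ := fun z => ∫ y, S z x y ∂F - ∫ y, S z (T F) y ∂F with hg
    have hgint : Integrable g ν := (gint x hx F hF).sub (gint (T F) (hTA F hF) F hF)
    have hg0 : 0 ≤ᵐ[ν] g :=
      Filter.Eventually.of_forall fun z => sub_nonneg.mpr (hcons z x hx F hF)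
    have hgI : ∫ z, g z ∂ν = 0 := by
      simp only [hg]
      rw [integral_sub (gint x hx F hF) (gint (T F) (hTA F hF) F hF), heq, sub_self]
    have hae : g =ᵐ[ν] 0 := (integral_eq_zero_iff_of_nonneg_ae hg0 hgint).mp hgI
    have : {z | g z = 0}.Nonempty := by
      by_contra h
      rw [Set.not_nonempty_iff_eq_empty] at h
      have : ν Set.univ = 0 := by
        have := ae_iff.mp hae
        simp only [Pi.zero_apply] at this
        have huniv : {z | ¬ g z = 0} = Set.univ := by
          ext z; simp only [Set.mem_setOf_eq, Set.mem_univ, iff_true]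
          intro hz; exact Set.eq_empty_iff_forall_notMem.mp h z hz
        rwa [huniv] at this
      exact hν (Measure.measure_univ_eq_zero.mp this)
    obtain ⟨z, hz⟩ := this
    exact hstrict z x hx F hF (sub_eq_zero.mp hz)
end

section
/- (Convexity of level sets) Let T : F → A ⊆ ℝ^k be an elicitable functional. Then for all F₀, F₁ ∈ F with T(F₀) = T(F₁) = t and all λ ∈ (0,1) such that F_λ := (1−λ)F₀ + λF₁ ∈ F, we have T(F_λ) = t. -/
open MeasureTheory

/-- Convexity of level sets: an elicitable functional takes the same value on convex
combinations of distributions on which it agrees. -/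
theorem elicitable_convex_level_sets {O : Type*} [MeasurableSpace O] {k : ℕ}
    (𝓕 : Set (Measure O)) (A : Set (Fin k → ℝ))
    (T : Measure O → (Fin k → ℝ)) (hTA : ∀ F ∈ 𝓕, T F ∈ A)
    (S : (Fin k → ℝ) → O → ℝ)
    (hSint : ∀ x ∈ A, ∀ F ∈ 𝓕, Integrable (S x) F)
    (hScons : ∀ x ∈ A, ∀ F ∈ 𝓕, ∫ y, S (T F) y ∂F ≤ ∫ y, S x y ∂F)
    (hSstrict : ∀ x ∈ A, ∀ F ∈ 𝓕, ∫ y, S x y ∂F = ∫ y, S (T F) y ∂F → x = T F)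
    (F₀ F₁ : Measure O) (hF₀ : F₀ ∈ 𝓕) (hF₁ : F₁ ∈ 𝓕)
    (t : Fin k → ℝ) (ht₀ : T F₀ = t) (ht₁ : T F₁ = t)
    (l : ℝ) (hl : l ∈ Set.Ioo (0:ℝ) 1)
    (hmix : ENNReal.ofReal (1 - l) • F₀ + ENNReal.ofReal l • F₁ ∈ 𝓕) :
    T (ENNReal.ofReal (1 - l) • F₀ + ENNReal.ofReal l • F₁) = t := by
  set Fl : Measure O := ENNReal.ofReal (1 - l) • F₀ + ENNReal.ofReal l • F₁ with hFl
  have htA : t ∈ A := ht₀ ▸ hTA F₀ hF₀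
  have ht'A : T Fl ∈ A := hTA Fl hmix
  have hl0 : (0:ℝ) ≤ 1 - l := by linarith [hl.2]
  have hl1 : (0:ℝ) ≤ l := le_of_lt hl.1
  -- integral over the mixture decomposes
  have hdecomp : ∀ x ∈ A, ∫ y, S x y ∂Fl
      = (1 - l) * ∫ y, S x y ∂F₀ + l * ∫ y, S x y ∂F₁ := by
    intro x hx
    rw [hFl, integral_add_measure ((hSint x hx F₀ hF₀).smul_measure ENNReal.ofReal_ne_top)
      ((hSint x hx F₁ hF₁).smul_measure ENNReal.ofReal_ne_top),
      integral_smul_measure, integral_smul_measure,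
      ENNReal.toReal_ofReal hl0, ENNReal.toReal_ofReal hl1]
    simp only [smul_eq_mul]
  -- lower bound: the mixture integral of S t is ≤ that of S (T Fl)
  have key : ∫ y, S t y ∂Fl ≤ ∫ y, S (T Fl) y ∂Fl := by
    rw [hdecomp t htA, hdecomp (T Fl) ht'A]
    have h0 : ∫ y, S t y ∂F₀ ≤ ∫ y, S (T Fl) y ∂F₀ := ht₀ ▸ hScons (T Fl) ht'A F₀ hF₀
    have h1 : ∫ y, S t y ∂F₁ ≤ ∫ y, S (T Fl) y ∂F₁ := ht₁ ▸ hScons (T Fl) ht'A F₁ hF₁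
    nlinarith
  have heq : ∫ y, S t y ∂Fl = ∫ y, S (T Fl) y ∂Fl :=
    le_antisymm key (hScons t htA Fl hmix)
  exact (hSstrict t htA Fl hmix heq).symm
end

section
/- (Elicitability of ratios of expectations) Let h : O → ℝ^k and q : O → (0,∞) be F-integrable, and define T(F) := (∫h₁ dF / ∫q dF, …, ∫h_k dF / ∫q dF). Let f : A → ℝ be strictly convex and differentiable and set S(x,y) := −f(x)q(y) − ∇f(x)ᵀ(h(y) − q(y)x). Then S is a strictly F-consistent scoring function for T; in particular T is elicitable. -/
/-! Integrating the score reduces the expected score of a report `x` to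
`(∫ q) * (⟪∇f x, x - T F⟫ - f x)`, because `∫ h = (∫ q) • T F`. Hence the excess expected score
of `x` over `T F` is `∫ q` times the Bregman divergence `f (T F) - f x - ⟪∇f x, T F - x⟫`,
which is positive for `x ≠ T F` by strict convexity. -/

open MeasureTheory Set

section Convexity

variable {E : Type*} [NormedAddCommGroup E] [NormedSpace ℝ E] {s : Set E} {f : E → ℝ}
  {f' : E →L[ℝ] ℝ} {x z : E}

theorem ConvexOn.le_sub_of_hasFDerivAt (hf : ConvexOn ℝ s f) (hx : x ∈ s) (hz : z ∈ s)
    (hf' : HasFDerivAt f f' x) : f' (z - x) ≤ f z - f x := by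
  set L : ℝ →ᵃ[ℝ] E := AffineMap.lineMap x z
  have hL : ∀ t : ℝ, L t = t • (z - x) + x := fun t => AffineMap.lineMap_apply_module' x z t
  have hφ : ConvexOn ℝ (Icc 0 1) (f ∘ L) :=
    (hf.comp_affineMap L).subset (fun t ht => hf.1.lineMap_mem hx hz ht) (convex_Icc 0 1)
  have hderiv : HasDerivAt (f ∘ L) (f' (z - x)) 0 := by
    have hline : HasDerivAt L (z - x) 0 := by
      simpa [funext hL] using ((hasDerivAt_id (0 : ℝ)).smul_const (z - x)).add_const x
    exact (by simpa [hL] using hf' : HasFDerivAt f f' (L 0)).comp_hasDerivAt 0 hline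
  have := hφ.le_slope_of_hasDerivAt (by simp) (by simp) zero_lt_one hderiv
  simpa [slope_def_field, hL] using this

theorem StrictConvexOn.lt_sub_of_hasFDerivAt (hf : StrictConvexOn ℝ s f) (hx : x ∈ s)
    (hz : z ∈ s) (hzx : z ≠ x) (hf' : HasFDerivAt f f' x) : f' (z - x) < f z - f x := by
  set m : E := (1 / 2 : ℝ) • x + (1 / 2 : ℝ) • z
  have hm : m ∈ s := hf.1 hx hz (by norm_num) (by norm_num) (by norm_num)
  have hmx : m - x = (1 / 2 : ℝ) • (z - x) := by simp only [m]; module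
  -- at the midpoint `m`, convexity bounds `f m - f x` below by the tangent and strict convexity
  -- bounds it above by half the chord
  have hle := hf.convexOn.le_sub_of_hasFDerivAt hx hm hf'
  have hlt : f m < (1 / 2 : ℝ) • f x + (1 / 2 : ℝ) • f z :=
    hf.2 hx hz hzx.symm (by norm_num) (by norm_num) (by norm_num)
  rw [hmx, map_smul, smul_eq_mul] at hle
  simp only [smul_eq_mul] at hlt
  linarith

end Convexity

section ExpectedScore

variable {O E : Type*} [MeasurableSpace O] [NormedAddCommGroup E] [InnerProductSpace ℝ E]
  [CompleteSpace E] {F : Measure O} {h : O → E} {q : O → ℝ}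

theorem integral_neg_mul_sub_inner_eq (hh : Integrable h F) (hq : Integrable q F) {t : E}
    (ht : ∫ y, h y ∂F = (∫ y, q y ∂F) • t) (a x : E) (c : ℝ) :
    ∫ y, (-c * q y - (inner ℝ a (h y - q y • x) : ℝ)) ∂F
      = (∫ y, q y ∂F) * ((inner ℝ a (x - t) : ℝ) - c) := by
  have hpt : ∀ y, -c * q y - (inner ℝ a (h y - q y • x) : ℝ)
      = q y * ((inner ℝ a x : ℝ) - c) - (inner ℝ a (h y) : ℝ) := fun y => by
    rw [inner_sub_right, real_inner_smul_right]
    ring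
  simp_rw [hpt]
  rw [integral_sub (hq.mul_const _) (hh.const_inner a), integral_mul_const, integral_inner hh, ht,
    real_inner_smul_right, inner_sub_right]
  ring

end ExpectedScore

theorem EuclideanSpace.integral_eq_smul_of_apply_eq_div {O : Type*} [MeasurableSpace O] {k : ℕ}
    {F : Measure O} {h : O → EuclideanSpace ℝ (Fin k)} (hh : Integrable h F)
    {c : ℝ} (hc : c ≠ 0) {t : EuclideanSpace ℝ (Fin k)}
    (ht : ∀ i, t i = (∫ y, h y i ∂F) / c) : ∫ y, h y ∂F = c • t := by
  ext i
  have hi : (∫ y, h y ∂F) i = ∫ y, h y i ∂F := by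
    simpa using ((EuclideanSpace.proj i : EuclideanSpace ℝ (Fin k) →L[ℝ] ℝ).integral_comp_comm
      hh).symm
  rw [PiLp.smul_apply, smul_eq_mul, ht i, hi, mul_div_cancel₀ _ hc]

theorem ratios_of_expectations_elicitable_general {O : Type*} [MeasurableSpace O] {k : ℕ}
    (𝓕 : Set (Measure O)) (A : Set (EuclideanSpace ℝ (Fin k)))
    (h : O → EuclideanSpace ℝ (Fin k)) (q : O → ℝ)
    (hhint : ∀ F ∈ 𝓕, Integrable h F)
    (hqint : ∀ F ∈ 𝓕, Integrable q F)
    (hqbar : ∀ F ∈ 𝓕, 0 < ∫ y, q y ∂F)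
    (T : Measure O → EuclideanSpace ℝ (Fin k))
    (hTdef : ∀ F ∈ 𝓕, ∀ i : Fin k, T F i = (∫ y, h y i ∂F) / (∫ y, q y ∂F))
    (hTA : ∀ F ∈ 𝓕, T F ∈ A)
    (f : EuclideanSpace ℝ (Fin k) → ℝ)
    (f' : EuclideanSpace ℝ (Fin k) → EuclideanSpace ℝ (Fin k))
    (hconv : StrictConvexOn ℝ A f)
    (hgrad : ∀ x ∈ A, HasGradientAt f (f' x) x) :
    (∀ x ∈ A, ∀ F ∈ 𝓕,
        ∫ y, (-f (T F) * q y - (inner ℝ (f' (T F)) (h y - q y • T F) : ℝ)) ∂F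
          ≤ ∫ y, (-f x * q y - (inner ℝ (f' x) (h y - q y • x) : ℝ)) ∂F) ∧
    (∀ x ∈ A, ∀ F ∈ 𝓕,
        ∫ y, (-f x * q y - (inner ℝ (f' x) (h y - q y • x) : ℝ)) ∂F
          = ∫ y, (-f (T F) * q y - (inner ℝ (f' (T F)) (h y - q y • T F) : ℝ)) ∂F
        → x = T F) := by
  have hlt : ∀ x ∈ A, ∀ F ∈ 𝓕, x ≠ T F →
      ∫ y, (-f (T F) * q y - (inner ℝ (f' (T F)) (h y - q y • T F) : ℝ)) ∂F
        < ∫ y, (-f x * q y - (inner ℝ (f' x) (h y - q y • x) : ℝ)) ∂F := by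
    intro x hx F hF hxT
    have hH :=
      EuclideanSpace.integral_eq_smul_of_apply_eq_div (hhint F hF) (hqbar F hF).ne' (hTdef F hF)
    rw [integral_neg_mul_sub_inner_eq (hhint F hF) (hqint F hF) hH,
      integral_neg_mul_sub_inner_eq (hhint F hF) (hqint F hF) hH, sub_self, inner_zero_right]
    have hbregman :=
      hconv.lt_sub_of_hasFDerivAt hx (hTA F hF) (Ne.symm hxT) (hgrad x hx).hasFDerivAt
    rw [InnerProductSpace.toDual_apply_apply, ← neg_sub x, inner_neg_right] at hbregman
    exact mul_lt_mul_of_pos_left (by linarith) (hqbar F hF)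
  refine ⟨fun x hx F hF => ?_, fun x hx F hF heq => ?_⟩
  · rcases eq_or_ne x (T F) with rfl | hxT
    · exact le_rfl
    · exact (hlt x hx F hF hxT).le
  · by_contra hxT
    exact (hlt x hx F hF hxT).ne' heq

/-- Elicitability of ratios of expectations with the same denominator. -/
theorem ratios_of_expectations_elicitable {O : Type*} [MeasurableSpace O] {k : ℕ}
    (𝓕 : Set (Measure O)) (A : Set (EuclideanSpace ℝ (Fin k)))
    (h : O → EuclideanSpace ℝ (Fin k)) (q : O → ℝ) (hqpos : ∀ y, 0 < q y)
    (hhint : ∀ F ∈ 𝓕, Integrable h F)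
    (hqint : ∀ F ∈ 𝓕, Integrable q F)
    (hqbar : ∀ F ∈ 𝓕, 0 < ∫ y, q y ∂F)
    (T : Measure O → EuclideanSpace ℝ (Fin k))
    (hTdef : ∀ F ∈ 𝓕, ∀ i : Fin k, T F i = (∫ y, h y i ∂F) / (∫ y, q y ∂F))
    (hTA : ∀ F ∈ 𝓕, T F ∈ A)
    (f : EuclideanSpace ℝ (Fin k) → ℝ)
    (f' : EuclideanSpace ℝ (Fin k) → EuclideanSpace ℝ (Fin k))
    (hconv : StrictConvexOn ℝ A f)
    (hgrad : ∀ x ∈ A, HasGradientAt f (f' x) x) :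
    (∀ x ∈ A, ∀ F ∈ 𝓕,
        ∫ y, (-f (T F) * q y - (inner ℝ (f' (T F)) (h y - q y • T F) : ℝ)) ∂F
          ≤ ∫ y, (-f x * q y - (inner ℝ (f' x) (h y - q y • x) : ℝ)) ∂F) ∧
    (∀ x ∈ A, ∀ F ∈ 𝓕,
        ∫ y, (-f x * q y - (inner ℝ (f' x) (h y - q y • x) : ℝ)) ∂F
          = ∫ y, (-f (T F) * q y - (inner ℝ (f' (T F)) (h y - q y • T F) : ℝ)) ∂F
        → x = T F) :=
  ratios_of_expectations_elicitable_general 𝓕 A h q hhint hqint hqbar T hTdef hTA f f' hconv hgrad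
end

section
/- Fix α ∈ (0,1) and let F be a class of distribution functions on ℝ having unique α-quantiles. Let g : ℝ → ℝ be strictly increasing and F-integrable. Then S(x,y) := (1_{y ≤ x} − α)(g(x) − g(y)) is a strictly F-consistent scoring function for the quantile functional T(F) := F^←(α); in particular the α-quantile is elicitable. -/
open MeasureTheory

/-- The lower quantile function of a measure on `ℝ`. -/
noncomputable def lowerQuantile (F : Measure ℝ) (α : ℝ) : ℝ :=
  sInf {x : ℝ | α ≤ (F (Set.Iic x)).toReal}

/-- The upper quantile function of a measure on `ℝ`. -/
noncomputable def upperQuantile (F : Measure ℝ) (α : ℝ) : ℝ :=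
  sInf {x : ℝ | α < (F (Set.Iic x)).toReal}

/-!
Write `S x y = (𝟙{y ≤ x} - α) (g x - g y)` and let `t` be the lower `α`-quantile. For `t < x` the
expected score difference splits as
`𝔼[S x] - 𝔼[S t] = ∫_{(t,x)} (g x - g y) dF + (F(t) - α) (g x - g t)`,
and for `x < t` (using that `S t t = 0`, so `𝟙{y ≤ t}` may be replaced by `𝟙{y < t}`) as
`𝔼[S x] - 𝔼[S t] = ∫_{(x,t)} (g y - g x) dF + (α - F(t-)) (g t - g x)`.
Since `F(t-) ≤ α ≤ F(t)` and `g` is increasing, both summands are nonnegative. If the second one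
vanishes, the first is positive: for `x < t` because `F(x) < α = F(t-)`, and for `t < x` because
uniqueness of the quantile gives `F(s) > α = F(t)` for every `s ∈ (t, x)`, so `F` charges `(t, x)`.
-/

open Set Filter ProbabilityTheory Function

section Quantile

variable {μ : Measure ℝ} {α x : ℝ}

lemma bddBelow_setOf_le_cdf (hα : 0 < α) : BddBelow {x | α ≤ cdf μ x} := by
  obtain ⟨b, hb⟩ := eventually_atBot.1 ((tendsto_cdf_atBot μ).eventually_lt_const hα)
  exact ⟨b, fun x hx => not_lt.1 fun hxb => (hb x hxb.le).not_ge hx⟩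

lemma nonempty_setOf_lt_cdf (hα : α < 1) : {x | α < cdf μ x}.Nonempty :=
  ((tendsto_cdf_atTop μ).eventually_const_lt hα).exists

lemma cdf_lt_of_lt_sInf (hα : 0 < α) (hx : x < sInf {x | α ≤ cdf μ x}) : cdf μ x < α :=
  not_le.1 fun h => hx.not_ge (csInf_le (bddBelow_setOf_le_cdf hα) h)

lemma le_cdf_sInf (hα : α < 1) : α ≤ cdf μ (sInf {x | α ≤ cdf μ x}) := by
  have hne : {x | α ≤ cdf μ x}.Nonempty :=
    (nonempty_setOf_lt_cdf hα).mono fun _ (h : α < _) => h.le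
  refine ge_of_tendsto (continuousWithinAt_Ioi_iff_Ici.2 ((cdf μ).right_continuous _))
    (eventually_nhdsWithin_of_forall fun s hs => ?_)
  obtain ⟨y, hy, hys⟩ := exists_lt_of_csInf_lt hne hs
  exact hy.trans (monotone_cdf μ hys.le)

lemma leftLim_cdf_sInf_le (hα : 0 < α) : leftLim (cdf μ) (sInf {x | α ≤ cdf μ x}) ≤ α :=
  le_of_tendsto ((monotone_cdf μ).tendsto_leftLim _)
    (eventually_nhdsWithin_of_forall fun _ hs => (cdf_lt_of_lt_sInf hα hs).le)

lemma lt_cdf_of_sInf_lt (hα : α < 1) (hx : sInf {x | α < cdf μ x} < x) : α < cdf μ x := by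
  obtain ⟨y, hy, hyx⟩ := exists_lt_of_csInf_lt (nonempty_setOf_lt_cdf hα) hx
  exact hy.trans_le (monotone_cdf μ hyx.le)

variable [IsProbabilityMeasure μ]

lemma lowerQuantile_eq_sInf_cdf : lowerQuantile μ α = sInf {x | α ≤ cdf μ x} := by
  simp only [lowerQuantile, cdf_eq_real, measureReal_def]

lemma upperQuantile_eq_sInf_cdf : upperQuantile μ α = sInf {x | α < cdf μ x} := by
  simp only [upperQuantile, cdf_eq_real, measureReal_def]

lemma measureReal_Iio_eq_leftLim_cdf (b : ℝ) : μ.real (Iio b) = leftLim (cdf μ) b := by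
  have hnonneg : 0 ≤ leftLim (cdf μ) b :=
    ge_of_tendsto ((monotone_cdf μ).tendsto_leftLim b) (Eventually.of_forall (cdf_nonneg μ))
  conv_lhs => rw [← measure_cdf μ]
  simp [measureReal_def, (cdf μ).measure_Iio (tendsto_cdf_atBot μ) b, hnonneg]

lemma measure_Ioo_pos_of_cdf_lt_leftLim {a b : ℝ} (h : cdf μ a < leftLim (cdf μ) b) :
    0 < μ (Ioo a b) := by
  conv => rhs; rw [← measure_cdf μ]
  rw [(cdf μ).measure_Ioo]
  exact ENNReal.ofReal_pos.2 (sub_pos.2 h)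

end Quantile

noncomputable def quantileScore (α : ℝ) (g : ℝ → ℝ) (x y : ℝ) : ℝ :=
  ((if y ≤ x then 1 else 0) - α) * (g x - g y)

section Score

variable {μ : Measure ℝ} [IsProbabilityMeasure μ] {α : ℝ} {g : ℝ → ℝ} {x t : ℝ}

lemma integrable_quantileScore (hg : Integrable g μ) : Integrable (quantileScore α g x) μ := by
  refine ((integrable_const (g x)).sub hg).bdd_mul (c := 1 + |α|)
    ((measurable_const.indicator measurableSet_Iic).sub_const α).aestronglyMeasurable
    (Eventually.of_forall fun y => ?_)
  refine (norm_sub_le _ _).trans (add_le_add ?_ le_rfl)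
  split_ifs <;> simp

lemma integral_quantileScore_sub_of_lt (hg : Integrable g μ) (hxt : x < t) :
    ∫ y, quantileScore α g x y ∂μ - ∫ y, quantileScore α g t y ∂μ
      = ∫ y in Ioo x t, (g y - g x) ∂μ + (α - μ.real (Iio t)) * (g t - g x) := by
  have hpt : ∀ y, quantileScore α g x y - quantileScore α g t y
      = (Ioo x t).indicator (fun y => g y - g x) y + (α - (Iio t).indicator 1 y) * (g t - g x) := by
    intro y
    simp only [quantileScore, indicator_apply, mem_Ioo, mem_Iio, Pi.one_apply]
    rcases le_or_gt y x with hyx | hxy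
    · simp [hyx, hyx.trans_lt hxt, hyx.trans hxt.le, not_lt.2 hyx]; ring
    rcases lt_trichotomy y t with hyt | rfl | hty
    · simp [hxy, hyt, hyt.le, not_le.2 hxy]; ring
    · simp [not_le.2 hxy]; ring
    · simp [not_le.2 hxy, not_le.2 hty, not_lt.2 hty.le]; ring
  have hind : Integrable (fun y => (Ioo x t).indicator (fun y => g y - g x) y) μ :=
    (hg.sub (integrable_const _)).indicator measurableSet_Ioo
  have hone : Integrable ((Iio t).indicator (1 : ℝ → ℝ)) μ :=
    (integrable_const 1).indicator measurableSet_Iio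
  have hconst : Integrable (fun y => (α - (Iio t).indicator 1 y) * (g t - g x)) μ :=
    ((integrable_const α).sub hone).mul_const _
  rw [← integral_sub (integrable_quantileScore hg) (integrable_quantileScore hg),
    integral_congr_ae (Eventually.of_forall hpt), integral_add hind hconst,
    integral_indicator measurableSet_Ioo, integral_mul_const,
    integral_sub (integrable_const α) hone, integral_const, integral_indicator_one measurableSet_Iio]
  simp

lemma integral_quantileScore_sub_of_gt (hg : Integrable g μ) (htx : t < x) :
    ∫ y, quantileScore α g x y ∂μ - ∫ y, quantileScore α g t y ∂μ
      = ∫ y in Ioo t x, (g x - g y) ∂μ + (μ.real (Iic t) - α) * (g x - g t) := by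
  have hpt : ∀ y, quantileScore α g x y - quantileScore α g t y
      = (Ioo t x).indicator (fun y => g x - g y) y + ((Iic t).indicator 1 y - α) * (g x - g t) := by
    intro y
    simp only [quantileScore, indicator_apply, mem_Ioo, mem_Iic, Pi.one_apply]
    rcases le_or_gt y t with hyt | hty
    · simp [hyt, hyt.trans htx.le, not_lt.2 hyt]; ring
    rcases lt_trichotomy y x with hyx | rfl | hxy
    · simp [hty, hyx, hyx.le, not_le.2 hty]; ring
    · simp [not_le.2 hty]; ring
    · simp [not_le.2 hty, not_le.2 hxy, not_lt.2 hxy.le]; ring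
  have hind : Integrable (fun y => (Ioo t x).indicator (fun y => g x - g y) y) μ :=
    ((integrable_const _).sub hg).indicator measurableSet_Ioo
  have hone : Integrable ((Iic t).indicator (1 : ℝ → ℝ)) μ :=
    (integrable_const 1).indicator measurableSet_Iic
  have hconst : Integrable (fun y => ((Iic t).indicator 1 y - α) * (g x - g t)) μ :=
    (hone.sub (integrable_const α)).mul_const _
  rw [← integral_sub (integrable_quantileScore hg) (integrable_quantileScore hg),
    integral_congr_ae (Eventually.of_forall hpt), integral_add hind hconst,
    integral_indicator measurableSet_Ioo, integral_mul_const,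
    integral_sub hone (integrable_const α), integral_const, integral_indicator_one measurableSet_Iic]
  simp

end Score

lemma setIntegral_pos_of_pos_on {X : Type*} [MeasurableSpace X] {μ : Measure X} {f : X → ℝ}
    {s : Set X} (hs : MeasurableSet s) (hμs : 0 < μ s) (hf : IntegrableOn f s μ)
    (hpos : ∀ y ∈ s, 0 < f y) : 0 < ∫ y in s, f y ∂μ := by
  rw [setIntegral_pos_iff_support_of_nonneg_ae
    (ae_restrict_of_forall_mem hs fun y hy => (hpos y hy).le) hf]
  rwa [inter_eq_right.2 fun y hy => mem_support.2 (hpos y hy).ne']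

lemma integral_quantileScore_lowerQuantile_lt {μ : Measure ℝ} [IsProbabilityMeasure μ]
    {α : ℝ} {g : ℝ → ℝ} {x : ℝ} (hα : α ∈ Ioo 0 1)
    (huniq : lowerQuantile μ α = upperQuantile μ α) (hg : StrictMono g)
    (hgi : Integrable g μ) (hx : x ≠ lowerQuantile μ α) :
    ∫ y, quantileScore α g (lowerQuantile μ α) y ∂μ < ∫ y, quantileScore α g x y ∂μ := by
  rw [← sub_pos, lowerQuantile_eq_sInf_cdf]
  rw [lowerQuantile_eq_sInf_cdf, upperQuantile_eq_sInf_cdf] at huniq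
  rw [lowerQuantile_eq_sInf_cdf] at hx
  set t := sInf {x | α ≤ cdf μ x}
  rcases hx.lt_or_gt with hxt | htx
  · rw [integral_quantileScore_sub_of_lt hgi hxt, measureReal_Iio_eq_leftLim_cdf]
    have hgap : 0 < g t - g x := sub_pos.2 (hg hxt)
    rcases (leftLim_cdf_sInf_le (μ := μ) hα.1).lt_or_eq with hlt | heq
    · refine add_pos_of_nonneg_of_pos ?_ (mul_pos (sub_pos.2 hlt) hgap)
      exact setIntegral_nonneg measurableSet_Ioo fun y hy => sub_nonneg.2 (hg hy.1).le
    · rw [heq, sub_self, zero_mul, add_zero]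
      have hcharge : 0 < μ (Ioo x t) :=
        measure_Ioo_pos_of_cdf_lt_leftLim (heq ▸ cdf_lt_of_lt_sInf hα.1 hxt)
      exact setIntegral_pos_of_pos_on measurableSet_Ioo hcharge
        (hgi.sub (integrable_const _)).integrableOn fun y hy => sub_pos.2 (hg hy.1)
  · rw [integral_quantileScore_sub_of_gt hgi htx, ← cdf_eq_real]
    have hgap : 0 < g x - g t := sub_pos.2 (hg htx)
    rcases (le_cdf_sInf (μ := μ) hα.2).lt_or_eq with hlt | heq
    · refine add_pos_of_nonneg_of_pos ?_ (mul_pos (sub_pos.2 hlt) hgap)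
      exact setIntegral_nonneg measurableSet_Ioo fun y hy => sub_nonneg.2 (hg hy.2).le
    · rw [← heq, sub_self, zero_mul, add_zero]
      obtain ⟨s, hts, hsx⟩ := exists_between htx
      have hcharge : 0 < μ (Ioo t x) := measure_Ioo_pos_of_cdf_lt_leftLim <|
        heq ▸ (lt_cdf_of_sInf_lt hα.2 (huniq ▸ hts)).trans_le ((monotone_cdf μ).le_leftLim hsx)
      exact setIntegral_pos_of_pos_on measurableSet_Ioo hcharge
        ((integrable_const _).sub hgi).integrableOn fun y hy => sub_pos.2 (hg hy.2)

/-- Strict consistency of the generalized pinball scoring function for the α-quantile. -/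
theorem quantile_elicitable (α : ℝ) (hα : α ∈ Set.Ioo (0:ℝ) 1)
    (𝓕 : Set (Measure ℝ)) (hprob : ∀ F ∈ 𝓕, IsProbabilityMeasure F)
    (huniq : ∀ F ∈ 𝓕, lowerQuantile F α = upperQuantile F α)
    (g : ℝ → ℝ) (hg : StrictMono g) (hgint : ∀ F ∈ 𝓕, Integrable g F) :
    (∀ x : ℝ, ∀ F ∈ 𝓕,
        ∫ y, ((if y ≤ lowerQuantile F α then (1:ℝ) else 0) - α) *
            (g (lowerQuantile F α) - g y) ∂F
          ≤ ∫ y, ((if y ≤ x then (1:ℝ) else 0) - α) * (g x - g y) ∂F) ∧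
    (∀ x : ℝ, ∀ F ∈ 𝓕,
        ∫ y, ((if y ≤ x then (1:ℝ) else 0) - α) * (g x - g y) ∂F
          = ∫ y, ((if y ≤ lowerQuantile F α then (1:ℝ) else 0) - α) *
              (g (lowerQuantile F α) - g y) ∂F
        → x = lowerQuantile F α) := by
  refine ⟨fun x F hF => ?_, fun x F hF hmin => ?_⟩
  · have := hprob F hF
    obtain rfl | hx := eq_or_ne x (lowerQuantile F α)
    · exact le_rfl
    · exact (integral_quantileScore_lowerQuantile_lt hα (huniq F hF) hg (hgint F hF) hx).le
  · have := hprob F hF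
    by_contra hx
    exact (integral_quantileScore_lowerQuantile_lt hα (huniq F hF) hg (hgint F hF) hx).ne' hmin
end

section
/- Fix τ ∈ (0,1) and let F be a class of distributions with finite first moments. Let f be a strictly convex, differentiable, F-integrable function. Then S(x,y) := |1_{y ≤ x} − τ| · (f(y) − f(x) − f'(x)(y−x)) is a strictly F-consistent scoring function for the τ-expectile; in particular the τ-expectile is elicitable. -/
/-!
Write `B_x(y) = f y - f x - f' x (y - x)` for the Bregman divergence, `w_x(y) = |1_{y ≤ x} - τ|`
and `φ_t(y) = w_t(y) (y - t)` for the identification function of the expectile, so that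
`E_F φ_t = 0` exactly when `t` is the `τ`-expectile of `F`. The three-point identity
`B_x(y) - B_t(y) = B_x(t) - (f' x - f' t)(y - t)` gives
`S(x, y) - S(t, y) = (w_x(y) - w_t(y)) B_x(y) + w_t(y) B_x(t) - (f' x - f' t) φ_t(y)`.
Either `y` lies on the same side of `x` and `t`, so that `w_x(y) = w_t(y)`, or it lies between
them, so that `B_x(y) ≤ B_x(t)`; in both cases the first two terms are at least
`min τ (1 - τ) · B_x(t)`. Integrating against `F` kills the `φ_t` term, hence
`E_F S(x, ·) ≥ E_F S(t, ·) + min τ (1 - τ) · B_x(t)`, and `B_x(t) > 0` for `x ≠ t` by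
strict convexity.
-/

open MeasureTheory Set

noncomputable def bregmanDiv (f : ℝ → ℝ) (x y : ℝ) : ℝ := f y - f x - deriv f x * (y - x)

section Bregman

variable {f : ℝ → ℝ}

lemma bregmanDiv_sub_bregmanDiv (x t y : ℝ) :
    bregmanDiv f x y - bregmanDiv f t y = bregmanDiv f x t - (deriv f x - deriv f t) * (y - t) := by
  unfold bregmanDiv; ring

lemma ConvexOn.bregmanDiv_nonneg (hf : ConvexOn ℝ univ f) {x : ℝ}
    (hx : DifferentiableAt ℝ f x) (y : ℝ) : 0 ≤ bregmanDiv f x y := by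
  unfold bregmanDiv
  rcases lt_trichotomy x y with h | rfl | h
  · have hslope := hf.deriv_le_slope trivial trivial h hx
    rw [slope_def_field, le_div_iff₀ (sub_pos.2 h)] at hslope
    linarith
  · simp
  · have hslope := hf.slope_le_deriv trivial trivial h hx
    rw [slope_def_field, div_le_iff₀ (sub_pos.2 h)] at hslope
    linarith

lemma StrictConvexOn.bregmanDiv_pos (hf : StrictConvexOn ℝ univ f) {x y : ℝ}
    (hx : DifferentiableAt ℝ f x) (hxy : x ≠ y) : 0 < bregmanDiv f x y := by
  unfold bregmanDiv
  rcases hxy.lt_or_gt with h | h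
  · have hslope := hf.deriv_lt_slope trivial trivial h hx
    rw [slope_def_field, lt_div_iff₀ (sub_pos.2 h)] at hslope
    linarith
  · have hslope := hf.slope_lt_deriv trivial trivial h hx
    rw [slope_def_field, div_lt_iff₀ (sub_pos.2 h)] at hslope
    linarith

lemma ConvexOn.bregmanDiv_le_of_mem_uIcc (hf : ConvexOn ℝ univ f) (hd : Differentiable ℝ f)
    {x t y : ℝ} (hy : y ∈ uIcc x t) : bregmanDiv f x y ≤ bregmanDiv f x t := by
  have hmono : Monotone (deriv f) := fun a b hab =>
    hf.monotoneOn_deriv (fun z _ => hd z) trivial trivial hab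
  have hderiv : 0 ≤ (deriv f y - deriv f x) * (t - y) := by
    rcases mem_uIcc.1 hy with ⟨hxy, hyt⟩ | ⟨htx, hyx⟩
    · exact mul_nonneg (sub_nonneg.2 (hmono hxy)) (sub_nonneg.2 hyt)
    · exact mul_nonneg_of_nonpos_of_nonpos (sub_nonpos.2 (hmono hyx)) (sub_nonpos.2 htx)
  have hyt := hf.bregmanDiv_nonneg (hd y) t
  unfold bregmanDiv at hyt ⊢
  nlinarith

end Bregman

noncomputable def expectileWeight (τ x y : ℝ) : ℝ := |(if y ≤ x then (1 : ℝ) else 0) - τ|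

noncomputable def expectileScore (τ : ℝ) (f : ℝ → ℝ) (x y : ℝ) : ℝ :=
  expectileWeight τ x y * bregmanDiv f x y

def expectileIdent (τ x y : ℝ) : ℝ := τ * max (y - x) 0 - (1 - τ) * max (x - y) 0

section Expectile

variable {τ : ℝ} {f : ℝ → ℝ}

lemma min_le_expectileWeight (x y : ℝ) : min τ (1 - τ) ≤ expectileWeight τ x y := by
  unfold expectileWeight
  split_ifs
  · exact (min_le_right _ _).trans (le_abs_self _)
  · rw [zero_sub, abs_neg]
    exact (min_le_left _ _).trans (le_abs_self τ)

lemma expectileWeight_mul_sub (hτ : τ ∈ Icc 0 1) (x y : ℝ) :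
    expectileWeight τ x y * (y - x) = expectileIdent τ x y := by
  unfold expectileWeight expectileIdent
  split_ifs with h
  · rw [abs_of_nonneg (by linarith [hτ.2]), max_eq_right (by linarith), max_eq_left (by linarith)]
    ring
  · rw [zero_sub, abs_neg, abs_of_nonneg hτ.1, max_eq_left (by linarith),
      max_eq_right (by linarith)]
    ring

lemma expectileScore_sub_expectileScore_ge (hτ : τ ∈ Icc 0 1) (hf : ConvexOn ℝ univ f)
    (hd : Differentiable ℝ f) (x t y : ℝ) :
    min τ (1 - τ) * bregmanDiv f x t - (deriv f x - deriv f t) * expectileIdent τ t y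
      ≤ expectileScore τ f x y - expectileScore τ f t y := by
  have hsplit : expectileScore τ f x y - expectileScore τ f t y
      = (expectileWeight τ x y - expectileWeight τ t y) * bregmanDiv f x y
        + expectileWeight τ t y * bregmanDiv f x t
        - (deriv f x - deriv f t) * expectileIdent τ t y := by
    rw [← expectileWeight_mul_sub hτ, expectileScore, expectileScore]
    linear_combination expectileWeight τ t y * bregmanDiv_sub_bregmanDiv (f := f) x t y
  set wx := expectileWeight τ x y
  set wt := expectileWeight τ t y
  have hwx := min_le_expectileWeight (τ := τ) x y
  have hwt := min_le_expectileWeight (τ := τ) t y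
  have hxt := hf.bregmanDiv_nonneg (hd x) t
  have hxy := hf.bregmanDiv_nonneg (hd x) y
  rw [hsplit]
  by_cases hside : (y ≤ x ↔ y ≤ t)
  · have hw : wx = wt := by simp only [wx, wt, expectileWeight, hside]
    rw [hw]
    nlinarith
  · have hbetween : bregmanDiv f x y ≤ bregmanDiv f x t :=
      hf.bregmanDiv_le_of_mem_uIcc hd (by rw [mem_uIcc]; grind)
    rcases le_total wx wt with h | h <;> nlinarith

variable {μ : Measure ℝ}

lemma integrable_expectileScore [IsFiniteMeasure μ] (hid : Integrable id μ)
    (hf : Integrable f μ) (x : ℝ) : Integrable (expectileScore τ f x) μ := by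
  have hB : Integrable (bregmanDiv f x) μ :=
    (hf.sub (integrable_const _)).sub ((hid.sub (integrable_const x)).const_mul _)
  refine hB.bdd_mul (c := 1 + |τ|) ?_ (ae_of_all _ fun y => ?_)
  · exact ((measurable_const.ite measurableSet_Iic measurable_const).sub
      measurable_const).abs.aestronglyMeasurable
  · rw [Real.norm_eq_abs, expectileWeight, abs_abs]
    exact (abs_sub _ _).trans (by gcongr; split_ifs <;> simp)

lemma integral_expectileIdent_eq_zero [IsFiniteMeasure μ] (hid : Integrable id μ) {t : ℝ}
    (ht : τ * ∫ y, max (y - t) 0 ∂μ = (1 - τ) * ∫ y, max (t - y) 0 ∂μ) :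
    ∫ y, expectileIdent τ t y ∂μ = 0 := by
  have hpos : Integrable (fun y => max (y - t) 0) μ := (hid.sub (integrable_const t)).pos_part
  have hneg : Integrable (fun y => max (t - y) 0) μ := ((integrable_const t).sub hid).pos_part
  simp only [expectileIdent]
  rw [integral_sub (hpos.const_mul τ) (hneg.const_mul (1 - τ)),
    integral_const_mul, integral_const_mul, ht, sub_self]

lemma integral_expectileScore_add_le [IsProbabilityMeasure μ] (hτ : τ ∈ Icc 0 1)
    (hf : ConvexOn ℝ univ f) (hd : Differentiable ℝ f) (hid : Integrable id μ)
    (hfi : Integrable f μ) {t : ℝ}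
    (ht : τ * ∫ y, max (y - t) 0 ∂μ = (1 - τ) * ∫ y, max (t - y) 0 ∂μ) (x : ℝ) :
    ∫ y, expectileScore τ f t y ∂μ + min τ (1 - τ) * bregmanDiv f x t
      ≤ ∫ y, expectileScore τ f x y ∂μ := by
  have hident : Integrable (expectileIdent τ t) μ :=
    ((hid.sub (integrable_const t)).pos_part.const_mul τ).sub
      (((integrable_const t).sub hid).pos_part.const_mul (1 - τ))
  have hmono : ∫ y, (min τ (1 - τ) * bregmanDiv f x t
        - (deriv f x - deriv f t) * expectileIdent τ t y) ∂μ
      ≤ ∫ y, (expectileScore τ f x y - expectileScore τ f t y) ∂μ :=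
    integral_mono ((integrable_const _).sub (hident.const_mul _))
      ((integrable_expectileScore hid hfi x).sub (integrable_expectileScore hid hfi t))
      (expectileScore_sub_expectileScore_ge hτ hf hd x t)
  rw [integral_sub (integrable_const _) (hident.const_mul _),
    integral_const_mul (deriv f x - deriv f t), integral_expectileIdent_eq_zero hid ht,
    integral_sub (integrable_expectileScore hid hfi x) (integrable_expectileScore hid hfi t),
    integral_const, probReal_univ, one_smul] at hmono
  linarith

end Expectile

/-- Strict consistency of asymmetric Bregman scoring functions for the τ-expectile;
in particular the τ-expectile is elicitable. -/
theorem expectile_elicitable (τ : ℝ) (hτ : τ ∈ Set.Ioo (0:ℝ) 1)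
    (𝓕 : Set (Measure ℝ)) (hprob : ∀ F ∈ 𝓕, IsProbabilityMeasure F)
    (hmom : ∀ F ∈ 𝓕, Integrable id F)
    (T : Measure ℝ → ℝ)
    (hT : ∀ F ∈ 𝓕,
        τ * ∫ y, max (y - T F) 0 ∂F = (1 - τ) * ∫ y, max (T F - y) 0 ∂F)
    (f : ℝ → ℝ) (hconv : StrictConvexOn ℝ Set.univ f)
    (hdiff : Differentiable ℝ f)
    (hfint : ∀ F ∈ 𝓕, Integrable f F) :
    (∀ x : ℝ, ∀ F ∈ 𝓕,
        ∫ y, |(if y ≤ T F then (1:ℝ) else 0) - τ| *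
            (f y - f (T F) - deriv f (T F) * (y - T F)) ∂F
          ≤ ∫ y, |(if y ≤ x then (1:ℝ) else 0) - τ| *
              (f y - f x - deriv f x * (y - x)) ∂F) ∧
    (∀ x : ℝ, ∀ F ∈ 𝓕,
        ∫ y, |(if y ≤ x then (1:ℝ) else 0) - τ| *
            (f y - f x - deriv f x * (y - x)) ∂F
          = ∫ y, |(if y ≤ T F then (1:ℝ) else 0) - τ| *
              (f y - f (T F) - deriv f (T F) * (y - T F)) ∂F
        → x = T F) := by
  have hc : 0 < min τ (1 - τ) := lt_min hτ.1 (sub_pos.2 hτ.2)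
  have key : ∀ x, ∀ F ∈ 𝓕, ∫ y, expectileScore τ f (T F) y ∂F
      + min τ (1 - τ) * bregmanDiv f x (T F) ≤ ∫ y, expectileScore τ f x y ∂F :=
    fun x F hF => haveI := hprob F hF
      integral_expectileScore_add_le (Ioo_subset_Icc_self hτ) hconv.convexOn hdiff
        (hmom F hF) (hfint F hF) (hT F hF) x
  refine ⟨fun x F hF => ?_, fun x F hF heq => ?_⟩
  · exact (le_add_of_nonneg_right
      (mul_nonneg hc.le (hconv.convexOn.bregmanDiv_nonneg (hdiff x) _))).trans (key x F hF)
  · by_contra hne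
    have hlt : ∫ y, expectileScore τ f (T F) y ∂F < ∫ y, expectileScore τ f x y ∂F :=
      (lt_add_of_pos_right _ (mul_pos hc (hconv.bregmanDiv_pos (hdiff x) hne))).trans_le
        (key x F hF)
    exact hlt.ne' heq
end

section
/- A scoring rule S : 𝒫 × Ω → ℝ on a convex class 𝒫 of probability measures is (strictly) proper if and only if there exists a (strictly) convex function G : 𝒫 → ℝ such that S(P,ω) = ∫G*(P,ω')dP(ω') − G*(P,ω) − G(P) for all P ∈ 𝒫 and ω ∈ Ω, where G*(P,·) is a subtangent of G at P (i.e., an integrable function with G(Q) ≥ G(P) + ∫G*(P,ω)d(Q−P)(ω) for all Q ∈ 𝒫). -/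
open MeasureTheory

/-- Convex combination of two measures. -/
noncomputable def mixM {Ω : Type*} [MeasurableSpace Ω] (l : ℝ) (P Q : Measure Ω) :
    Measure Ω :=
  ENNReal.ofReal l • P + ENNReal.ofReal (1 - l) • Q


lemma integrable_mixM {Ω : Type*} [MeasurableSpace Ω] {l : ℝ} {P Q : Measure Ω}
    {f : Ω → ℝ} (hP : Integrable f P) (hQ : Integrable f Q) :
    Integrable f (mixM l P Q) :=
  (hP.smul_measure ENNReal.ofReal_ne_top).add_measure
    (hQ.smul_measure ENNReal.ofReal_ne_top)

lemma integral_mixM {Ω : Type*} [MeasurableSpace Ω] {l : ℝ} (hl0 : 0 ≤ l) (hl1 : l ≤ 1)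
    {P Q : Measure Ω} {f : Ω → ℝ} (hP : Integrable f P) (hQ : Integrable f Q) :
    ∫ ω, f ω ∂(mixM l P Q) = l * ∫ ω, f ω ∂P + (1 - l) * ∫ ω, f ω ∂Q := by
  rw [mixM, integral_add_measure (hP.smul_measure ENNReal.ofReal_ne_top)
      (hQ.smul_measure ENNReal.ofReal_ne_top), integral_smul_measure,
      integral_smul_measure, ENNReal.toReal_ofReal hl0,
      ENNReal.toReal_ofReal (by linarith)]
  simp [smul_eq_mul]

lemma mixM_eq_left {Ω : Type*} [MeasurableSpace Ω] {l : ℝ} (hl0 : 0 < l) (hl1 : l < 1)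
    {P Q : Measure Ω} [IsProbabilityMeasure P] [IsProbabilityMeasure Q]
    (h : mixM l P Q = P) : P = Q := by
  ext s hs
  have h1 : ENNReal.ofReal l * P s + ENNReal.ofReal (1 - l) * Q s = P s := by
    have := congrArg (fun μ : Measure Ω => μ s) h
    simpa [mixM] using this
  have hPf : P s ≠ ⊤ := measure_ne_top P s
  have hQf : Q s ≠ ⊤ := measure_ne_top Q s
  have h2 : l * (P s).toReal + (1 - l) * (Q s).toReal = (P s).toReal := by
    have := congrArg ENNReal.toReal h1
    rwa [ENNReal.toReal_add (by finiteness) (by finiteness), ENNReal.toReal_mul,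
      ENNReal.toReal_mul, ENNReal.toReal_ofReal hl0.le,
      ENNReal.toReal_ofReal (by linarith)] at this
  have h3 : (P s).toReal = (Q s).toReal := by
    have h4 : (1 - l) * (P s).toReal = (1 - l) * (Q s).toReal := by linarith
    have hpos : (0:ℝ) < 1 - l := by linarith
    exact mul_left_cancel₀ (ne_of_gt hpos) h4
  exact (ENNReal.toReal_eq_toReal_iff' hPf hQf).mp h3

lemma mixM_eq_right {Ω : Type*} [MeasurableSpace Ω] {l : ℝ} (hl0 : 0 < l) (hl1 : l < 1)
    {P Q : Measure Ω} [IsProbabilityMeasure P] [IsProbabilityMeasure Q]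
    (h : mixM l P Q = Q) : P = Q := by
  ext s hs
  have h1 : ENNReal.ofReal l * P s + ENNReal.ofReal (1 - l) * Q s = Q s := by
    have := congrArg (fun μ : Measure Ω => μ s) h
    simpa [mixM] using this
  have hPf : P s ≠ ⊤ := measure_ne_top P s
  have hQf : Q s ≠ ⊤ := measure_ne_top Q s
  have h2 : l * (P s).toReal + (1 - l) * (Q s).toReal = (Q s).toReal := by
    have := congrArg ENNReal.toReal h1
    rwa [ENNReal.toReal_add (by finiteness) (by finiteness), ENNReal.toReal_mul,
      ENNReal.toReal_mul, ENNReal.toReal_ofReal hl0.le,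
      ENNReal.toReal_ofReal (by linarith)] at this
  have h3 : (P s).toReal = (Q s).toReal := by
    have h4 : l * (P s).toReal = l * (Q s).toReal := by linarith
    exact mul_left_cancel₀ (ne_of_gt hl0) h4
  exact (ENNReal.toReal_eq_toReal_iff' hPf hQf).mp h3

lemma score_expect {Ω : Type*} [MeasurableSpace Ω] {S Gs : Measure Ω → Ω → ℝ}
    {G : Measure Ω → ℝ} {P Q : Measure Ω} [IsProbabilityMeasure Q]
    (hint : Integrable (Gs P) Q)
    (hrep : ∀ ω, S P ω = (∫ ω', Gs P ω' ∂P) - Gs P ω - G P) :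
    ∫ ω, S P ω ∂Q = (∫ ω, Gs P ω ∂P) - (∫ ω, Gs P ω ∂Q) - G P := by
  have h1 : ∫ ω, S P ω ∂Q
      = ∫ ω, ((∫ ω', Gs P ω' ∂P) - Gs P ω - G P) ∂Q := by
    exact integral_congr_ae (Filter.Eventually.of_forall hrep)
  have h2 : Integrable (fun ω => (∫ ω', Gs P ω' ∂P) - Gs P ω) Q :=
    (integrable_const _).sub hint
  rw [h1, integral_sub h2 (integrable_const _),
    integral_sub (integrable_const _) hint, integral_const, integral_const]
  simp [measure_univ]


/-- Characterization of (strictly) proper scoring rules via (strictly) convex functions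
and their subtangents (Gneiting–Raftery). -/
theorem proper_scoring_rule_characterization {Ω : Type*} [MeasurableSpace Ω]
    (Pcl : Set (Measure Ω)) (hprob : ∀ P ∈ Pcl, IsProbabilityMeasure P)
    (hconvcl : ∀ P ∈ Pcl, ∀ Q ∈ Pcl, ∀ l ∈ Set.Icc (0:ℝ) 1, mixM l P Q ∈ Pcl)
    (S : Measure Ω → Ω → ℝ)
    (hSint : ∀ P ∈ Pcl, ∀ Q ∈ Pcl, Integrable (S P) Q) :
    -- proper case
    ((∀ P ∈ Pcl, ∀ Q ∈ Pcl, ∫ ω, S Q ω ∂Q ≤ ∫ ω, S P ω ∂Q) ↔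
      ∃ (G : Measure Ω → ℝ) (Gs : Measure Ω → Ω → ℝ),
        (∀ P ∈ Pcl, ∀ Q ∈ Pcl, ∀ l ∈ Set.Ioo (0:ℝ) 1,
            G (mixM l P Q) ≤ l * G P + (1 - l) * G Q) ∧
        (∀ P ∈ Pcl, ∀ Q ∈ Pcl, Integrable (Gs P) Q) ∧
        (∀ P ∈ Pcl, ∀ Q ∈ Pcl,
            G P + ((∫ ω, Gs P ω ∂Q) - ∫ ω, Gs P ω ∂P) ≤ G Q) ∧
        (∀ P ∈ Pcl, ∀ ω : Ω, S P ω = (∫ ω', Gs P ω' ∂P) - Gs P ω - G P)) ∧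
    -- strictly proper case
    (((∀ P ∈ Pcl, ∀ Q ∈ Pcl, ∫ ω, S Q ω ∂Q ≤ ∫ ω, S P ω ∂Q) ∧
      (∀ P ∈ Pcl, ∀ Q ∈ Pcl, ∫ ω, S Q ω ∂Q = ∫ ω, S P ω ∂Q → P = Q)) ↔
      ∃ (G : Measure Ω → ℝ) (Gs : Measure Ω → Ω → ℝ),
        (∀ P ∈ Pcl, ∀ Q ∈ Pcl, P ≠ Q → ∀ l ∈ Set.Ioo (0:ℝ) 1,
            G (mixM l P Q) < l * G P + (1 - l) * G Q) ∧
        (∀ P ∈ Pcl, ∀ Q ∈ Pcl, Integrable (Gs P) Q) ∧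
        (∀ P ∈ Pcl, ∀ Q ∈ Pcl,
            G P + ((∫ ω, Gs P ω ∂Q) - ∫ ω, Gs P ω ∂P) ≤ G Q) ∧
        (∀ P ∈ Pcl, ∀ ω : Ω, S P ω = (∫ ω', Gs P ω' ∂P) - Gs P ω - G P)) := by
  constructor
  · constructor
    · intro hproper
      refine ⟨fun P => -∫ ω, S P ω ∂P, fun P ω => -(S P ω), ?_, ?_, ?_, ?_⟩
      · intro P hP Q hQ l hl
        obtain ⟨hl0, hl1⟩ := hl
        have hM : mixM l P Q ∈ Pcl := hconvcl P hP Q hQ l ⟨hl0.le, hl1.le⟩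
        have hint : ∫ ω, S (mixM l P Q) ω ∂(mixM l P Q)
            = l * ∫ ω, S (mixM l P Q) ω ∂P + (1 - l) * ∫ ω, S (mixM l P Q) ω ∂Q :=
          integral_mixM hl0.le hl1.le (hSint _ hM P hP) (hSint _ hM Q hQ)
        have h1 := hproper (mixM l P Q) hM P hP
        have h2 := hproper (mixM l P Q) hM Q hQ
        have h1' := mul_le_mul_of_nonneg_left h1 hl0.le
        have h2' := mul_le_mul_of_nonneg_left h2 (by linarith : (0:ℝ) ≤ 1 - l)
        simp only [hint]
        nlinarith [h1', h2']
      · intro P hP Q hQ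
        exact (hSint P hP Q hQ).neg
      · intro P hP Q hQ
        have h := hproper P hP Q hQ
        simp only [integral_neg]
        linarith
      · intro P hP ω
        simp only [integral_neg]
        ring
    · rintro ⟨G, Gs, hconv, hGsint, hsub, hrep⟩ P hP Q hQ
      haveI := hprob Q hQ
      have hPQ : ∫ ω, S P ω ∂Q
          = (∫ ω, Gs P ω ∂P) - (∫ ω, Gs P ω ∂Q) - G P :=
        score_expect (hGsint P hP Q hQ) (hrep P hP)
      have hQQ : ∫ ω, S Q ω ∂Q
          = (∫ ω, Gs Q ω ∂Q) - (∫ ω, Gs Q ω ∂Q) - G Q :=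
        score_expect (hGsint Q hQ Q hQ) (hrep Q hQ)
      have h := hsub P hP Q hQ
      linarith
  · constructor
    · rintro ⟨hproper, hstrict⟩
      refine ⟨fun P => -∫ ω, S P ω ∂P, fun P ω => -(S P ω), ?_, ?_, ?_, ?_⟩
      · intro P hP Q hQ hne l hl
        obtain ⟨hl0, hl1⟩ := hl
        haveI := hprob P hP
        haveI := hprob Q hQ
        have hM : mixM l P Q ∈ Pcl := hconvcl P hP Q hQ l ⟨hl0.le, hl1.le⟩
        have hMP : mixM l P Q ≠ P := fun h => hne (mixM_eq_left hl0 hl1 h)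
        have hMQ : mixM l P Q ≠ Q := fun h => hne (mixM_eq_right hl0 hl1 h)
        have hint : ∫ ω, S (mixM l P Q) ω ∂(mixM l P Q)
            = l * ∫ ω, S (mixM l P Q) ω ∂P + (1 - l) * ∫ ω, S (mixM l P Q) ω ∂Q :=
          integral_mixM hl0.le hl1.le (hSint _ hM P hP) (hSint _ hM Q hQ)
        have h1 : ∫ ω, S P ω ∂P < ∫ ω, S (mixM l P Q) ω ∂P :=
          lt_of_le_of_ne (hproper (mixM l P Q) hM P hP)
            (fun h => hMP (hstrict (mixM l P Q) hM P hP h))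
        have h2 : ∫ ω, S Q ω ∂Q < ∫ ω, S (mixM l P Q) ω ∂Q :=
          lt_of_le_of_ne (hproper (mixM l P Q) hM Q hQ)
            (fun h => hMQ (hstrict (mixM l P Q) hM Q hQ h))
        have h1' := mul_lt_mul_of_pos_left h1 hl0
        have h2' := mul_lt_mul_of_pos_left h2 (by linarith : (0:ℝ) < 1 - l)
        simp only [hint]
        nlinarith [h1', h2']
      · intro P hP Q hQ
        exact (hSint P hP Q hQ).neg
      · intro P hP Q hQ
        have h := hproper P hP Q hQ
        simp only [integral_neg]
        linarith
      · intro P hP ω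
        simp only [integral_neg]
        ring
    · rintro ⟨G, Gs, hconv, hGsint, hsub, hrep⟩
      have hscore : ∀ P ∈ Pcl, ∀ Q ∈ Pcl, ∫ ω, S P ω ∂Q
          = (∫ ω, Gs P ω ∂P) - (∫ ω, Gs P ω ∂Q) - G P := by
        intro P hP Q hQ
        haveI := hprob Q hQ
        exact score_expect (hGsint P hP Q hQ) (hrep P hP)
      constructor
      · intro P hP Q hQ
        have hPQ := hscore P hP Q hQ
        have hQQ := hscore Q hQ Q hQ
        have h := hsub P hP Q hQ
        linarith
      · intro P hP Q hQ heq
        by_contra hne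
        have hM : mixM (1/2) P Q ∈ Pcl :=
          hconvcl P hP Q hQ (1/2) ⟨by norm_num, by norm_num⟩
        have hGM := hconv P hP Q hQ hne (1/2) ⟨by norm_num, by norm_num⟩
        have hintM : ∫ ω, Gs P ω ∂(mixM (1/2) P Q)
            = (1/2) * ∫ ω, Gs P ω ∂P + (1 - 1/2) * ∫ ω, Gs P ω ∂Q :=
          integral_mixM (by norm_num) (by norm_num)
            (hGsint P hP P hP) (hGsint P hP Q hQ)
        have hsubM := hsub P hP (mixM (1/2) P Q) hM
        have hPQ := hscore P hP Q hQ
        have hQQ := hscore Q hQ Q hQ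
        rw [hintM] at hsubM
        rw [hPQ, hQQ] at heq
        linarith
end

section
/- Two random variables X and Y on a probability space are comonotonic (i.e., (X(ω)−X(ω'))(Y(ω)−Y(ω')) ≥ 0 holds ℙ⊗ℙ-a.s.) if and only if their joint distribution function satisfies F_{X,Y}(a,b) = min(F_X(a), F_Y(b)) for all a,b ∈ ℝ, which in turn holds if and only if (X,Y) has the same law as (F_X^←(U), F_Y^←(U)) for U uniformly distributed on [0,1]. -/
/-!
Write `A a = {X ≤ a}` and `B b = {Y ≤ b}`. A pair `(ω, ω')` is discordant exactly when, for some
rationals `a, b`, it lies in `(A a \ B b) ×ˢ (B b \ A a)` or in the mirror image of that rectangle.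
So (i) says `P (A a \ B b) * P (B b \ A a) = 0` for all `a, b`, i.e. one of `A a`, `B b` is almost
surely contained in the other, and that is (ii).

For (iii), the Galois connection `F←(u) ≤ a ↔ u ≤ F a` for `u ∈ (0, 1)` shows that
`(F_X←(U), F_Y←(U))` has joint distribution function `min (F_X a) (F_Y b)`, and a finite measure
on `ℝ × ℝ` is determined by its values on the quadrants `Iic a ×ˢ Iic b`.
-/

open MeasureTheory

/-- The lower quantile function of a measure on `ℝ`. -/
noncomputable def lq (μ : Measure ℝ) (u : ℝ) : ℝ :=
  sInf {x : ℝ | u ≤ (μ (Set.Iic x)).toReal}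

open ProbabilityTheory Set

section Quantile

variable {μ : Measure ℝ} [IsProbabilityMeasure μ]

lemma lq_le_iff_le_cdf {u : ℝ} (hu : u ∈ Ioo (0 : ℝ) 1) (a : ℝ) :
    lq μ u ≤ a ↔ u ≤ cdf μ a := by
  have hS : lq μ u = sInf {x | u ≤ cdf μ x} := by simp_rw [lq, cdf_eq_real, measureReal_def]
  have hne : {x | u ≤ cdf μ x}.Nonempty :=
    ((tendsto_cdf_atTop μ).eventually (eventually_ge_nhds hu.2)).exists
  have hbdd : BddBelow {x | u ≤ cdf μ x} := by
    obtain ⟨x₀, hx₀⟩ := Filter.eventually_atBot.1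
      ((tendsto_cdf_atBot μ).eventually (eventually_lt_nhds hu.1))
    exact ⟨x₀, fun x hx => le_of_not_gt fun hlt => (hx₀ x hlt.le).not_ge hx⟩
  rw [hS]
  refine ⟨fun h => ?_, fun h => csInf_le hbdd h⟩
  have hright : ∀ x ∈ Ioi a, u ≤ cdf μ x := fun x hx => by
    obtain ⟨s, hs, hsx⟩ := exists_lt_of_csInf_lt hne (h.trans_lt hx)
    exact hs.trans (monotone_cdf μ hsx.le)
  exact ge_of_tendsto ((cdf μ).right_continuous a |>.mono Ioi_subset_Ici_self)
    (eventually_nhdsWithin_of_forall hright)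

lemma monotoneOn_lq : MonotoneOn (lq μ) (Ioo (0 : ℝ) 1) := fun _ hu _ hv huv =>
  (lq_le_iff_le_cdf hu _).2 (huv.trans ((lq_le_iff_le_cdf hv _).1 le_rfl))

end Quantile

lemma MeasureTheory.Measure.ext_of_Iic_prod_Iic {μ ν : Measure (ℝ × ℝ)} [IsFiniteMeasure μ]
    (h : ∀ a b : ℝ, μ (Iic a ×ˢ Iic b) = ν (Iic a ×ˢ Iic b)) : μ = ν := by
  have hspan : IsCountablySpanning (range (Iic : ℝ → Set ℝ)) :=
    ⟨fun n => Iic (n : ℝ), fun n => mem_range_self _,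
      iUnion_eq_univ_iff.2 fun x => (exists_nat_ge x).imp fun _ hn => hn⟩
  have hborel : Real.measurableSpace = MeasurableSpace.generateFrom (range Iic) := by
    rw [BorelSpace.measurable_eq (α := ℝ), borel_eq_generateFrom_Iic]
  have hgen : (inferInstance : MeasurableSpace (ℝ × ℝ)) =
      MeasurableSpace.generateFrom (image2 (· ×ˢ ·) (range Iic) (range Iic)) := by
    rw [← generateFrom_prod_eq hspan hspan, ← hborel]
  refine Measure.ext_of_generateFrom_of_iUnion _ (fun n => Iic (n : ℝ) ×ˢ Iic (n : ℝ)) hgen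
    (isPiSystem_Iic.prod isPiSystem_Iic) ?_ (fun n => mem_image2_of_mem (mem_range_self _)
      (mem_range_self _)) (fun _ => measure_ne_top _ _) ?_
  · refine iUnion_eq_univ_iff.2 fun x => ?_
    obtain ⟨n, hn⟩ := exists_nat_ge (max x.1 x.2)
    exact ⟨n, (le_max_left _ _).trans hn, (le_max_right _ _).trans hn⟩
  · rintro _ ⟨_, ⟨a, rfl⟩, _, ⟨b, rfl⟩, rfl⟩
    exact h a b

lemma map_lq_prod_apply_Iic_prod_Iic (μ ν : Measure ℝ) [IsProbabilityMeasure μ]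
    [IsProbabilityMeasure ν] (a b : ℝ) :
    (volume.restrict (Icc (0 : ℝ) 1)).map (fun u => (lq μ u, lq ν u)) (Iic a ×ˢ Iic b) =
      min (μ (Iic a)) (ν (Iic b)) := by
  set m := min (cdf μ a) (cdf ν b)
  have hm : m ≤ 1 := min_le_of_left_le (cdf_le_one _ _)
  have hIoo : volume.restrict (Icc (0 : ℝ) 1) = volume.restrict (Ioo 0 1) :=
    (Measure.restrict_congr_set Ioo_ae_eq_Icc).symm
  have hmeas : AEMeasurable (fun u => (lq μ u, lq ν u)) (volume.restrict (Icc (0 : ℝ) 1)) := by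
    rw [hIoo]
    exact (aemeasurable_restrict_of_monotoneOn measurableSet_Ioo monotoneOn_lq).prodMk
      (aemeasurable_restrict_of_monotoneOn measurableSet_Ioo monotoneOn_lq)
  have hpre : (fun u => (lq μ u, lq ν u)) ⁻¹' (Iic a ×ˢ Iic b)
      =ᵐ[volume.restrict (Icc (0 : ℝ) 1)] Iic m := by
    rw [hIoo, Filter.eventuallyEq_set]
    filter_upwards [ae_restrict_mem measurableSet_Ioo] with u hu
    simp only [mem_preimage, mem_prod, mem_Iic, lq_le_iff_le_cdf hu, m, le_min_iff]
  have hIcc : Iic m ∩ Icc (0 : ℝ) 1 = Icc 0 m := by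
    ext u
    simp only [mem_inter_iff, mem_Iic, mem_Icc]
    constructor
    · rintro ⟨hum, hu0, -⟩
      exact ⟨hu0, hum⟩
    · rintro ⟨hu0, hum⟩
      exact ⟨hum, hu0, hum.trans hm⟩
  rw [Measure.map_apply_of_aemeasurable hmeas (measurableSet_Iic.prod measurableSet_Iic),
    measure_congr hpre, Measure.restrict_apply measurableSet_Iic, hIcc, Real.volume_Icc, sub_zero,
    ENNReal.ofReal_min, ofReal_cdf, ofReal_cdf]

lemma measure_inter_eq_min_iff {Ω : Type*} [MeasurableSpace Ω] {μ : Measure Ω}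
    [IsFiniteMeasure μ] {A B : Set Ω} (hA : MeasurableSet A) (hB : MeasurableSet B) :
    μ (A ∩ B) = min (μ A) (μ B) ↔ μ (A \ B) = 0 ∨ μ (B \ A) = 0 := by
  have hAB := measure_inter_add_sdiff (μ := μ) A hB
  have hBA := measure_inter_add_sdiff (μ := μ) B hA
  rw [inter_comm B A] at hBA
  constructor
  · intro h
    rcases min_choice (μ A) (μ B) with hmin | hmin <;> rw [hmin] at h
    · rw [h] at hAB
      exact .inl <| (ENNReal.add_right_inj (measure_ne_top μ A)).1 (hAB.trans (add_zero _).symm)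
    · rw [h] at hBA
      exact .inr <| (ENNReal.add_right_inj (measure_ne_top μ B)).1 (hBA.trans (add_zero _).symm)
  · rintro (h | h)
    · rw [h, add_zero] at hAB
      rw [hAB, min_eq_left (hAB ▸ measure_mono inter_subset_right)]
    · rw [h, add_zero] at hBA
      rw [hBA, min_eq_right (hBA ▸ measure_mono inter_subset_left)]

lemma ae_comonotone_iff {Ω : Type*} [MeasurableSpace Ω] {μ : Measure Ω} [SFinite μ]
    (X Y : Ω → ℝ) :
    (∀ᵐ p ∂μ.prod μ, 0 ≤ (X p.1 - X p.2) * (Y p.1 - Y p.2)) ↔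
      ∀ a b : ℝ, μ ({ω | X ω ≤ a} \ {ω | Y ω ≤ b}) = 0 ∨ μ ({ω | Y ω ≤ b} \ {ω | X ω ≤ a}) = 0 := by
  set A : ℝ → ℝ → Set Ω := fun a b => {ω | X ω ≤ a} \ {ω | Y ω ≤ b}
  set B : ℝ → ℝ → Set Ω := fun a b => {ω | Y ω ≤ b} \ {ω | X ω ≤ a}
  have hdiscordant : {p : Ω × Ω | ¬ 0 ≤ (X p.1 - X p.2) * (Y p.1 - Y p.2)} ⊆
      ⋃ (q : ℚ) (r : ℚ), (A q r ×ˢ B q r ∪ B q r ×ˢ A q r) := by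
    rintro ⟨ω, ω'⟩ hp
    simp only [mem_ofPred_eq, not_le, mul_neg_iff, sub_pos, sub_neg] at hp
    simp only [mem_iUnion, mem_union, A, B, mem_prod, mem_sdiff, mem_ofPred_eq, not_le]
    rcases hp with ⟨hX, hY⟩ | ⟨hX, hY⟩
    · obtain ⟨q, hq⟩ := exists_rat_btwn hX
      obtain ⟨r, hr⟩ := exists_rat_btwn hY
      exact ⟨q, r, Or.inr ⟨⟨hr.1.le, hq.2⟩, hq.1.le, hr.2⟩⟩
    · obtain ⟨q, hq⟩ := exists_rat_btwn hX
      obtain ⟨r, hr⟩ := exists_rat_btwn hY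
      exact ⟨q, r, Or.inl ⟨⟨hq.1.le, hr.2⟩, hr.1.le, hq.2⟩⟩
  constructor
  · refine fun h a b => mul_eq_zero.1 ?_
    rw [← Measure.prod_prod]
    refine measure_mono_null (fun p hp => ?_) (ae_iff.1 h)
    obtain ⟨⟨hXa, hYb⟩, hYb', hXa'⟩ := hp
    simp only [mem_ofPred_eq, not_le] at hXa hYb hYb' hXa' ⊢
    exact mul_neg_of_neg_of_pos (by linarith) (by linarith)
  · have hnull : ∀ a b, μ (A a b) = 0 ∨ μ (B a b) = 0 →
        (μ.prod μ) (A a b ×ˢ B a b ∪ B a b ×ˢ A a b) = 0 := fun a b h => by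
      rw [measure_union_null_iff, Measure.prod_prod, Measure.prod_prod, mul_comm (μ (B a b)),
        and_self, mul_eq_zero]
      exact h
    exact fun h => ae_iff.2 (measure_mono_null hdiscordant
      (measure_iUnion_null fun q => measure_iUnion_null fun r => hnull q r (h q r)))

/-- Equivalent characterizations of comonotonicity. -/
theorem comonotonic_iff {Ω : Type*} [MeasurableSpace Ω]
    (P : Measure Ω) [IsProbabilityMeasure P]
    (X Y : Ω → ℝ) (hX : Measurable X) (hY : Measurable Y) :
    -- (i) ↔ (ii)
    ((∀ᵐ p ∂(P.prod P), 0 ≤ (X p.1 - X p.2) * (Y p.1 - Y p.2)) ↔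
      (∀ a b : ℝ,
        P {ω | X ω ≤ a ∧ Y ω ≤ b} = min (P {ω | X ω ≤ a}) (P {ω | Y ω ≤ b}))) ∧
    -- (ii) ↔ (iii)
    ((∀ a b : ℝ,
        P {ω | X ω ≤ a ∧ Y ω ≤ b} = min (P {ω | X ω ≤ a}) (P {ω | Y ω ≤ b})) ↔
      P.map (fun ω => (X ω, Y ω)) =
        (volume.restrict (Set.Icc (0:ℝ) 1)).map
          (fun u => (lq (P.map X) u, lq (P.map Y) u))) := by
  have hXY : Measurable fun ω => (X ω, Y ω) := hX.prodMk hY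
  have : IsProbabilityMeasure (P.map X) := Measure.isProbabilityMeasure_map hX.aemeasurable
  have : IsProbabilityMeasure (P.map Y) := Measure.isProbabilityMeasure_map hY.aemeasurable
  have : IsProbabilityMeasure (P.map fun ω => (X ω, Y ω)) :=
    Measure.isProbabilityMeasure_map hXY.aemeasurable
  have hjoint : ∀ a b, P {ω | X ω ≤ a ∧ Y ω ≤ b} =
      P.map (fun ω => (X ω, Y ω)) (Iic a ×ˢ Iic b) := fun a b =>
    (Measure.map_apply hXY (measurableSet_Iic.prod measurableSet_Iic)).symm
  have hmarginal : ∀ (Z : Ω → ℝ), Measurable Z → ∀ a, P {ω | Z ω ≤ a} = P.map Z (Iic a) :=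
    fun Z hZ a => (Measure.map_apply hZ measurableSet_Iic).symm
  refine ⟨(ae_comonotone_iff X Y).trans (forall₂_congr fun a b =>
    (measure_inter_eq_min_iff (hX measurableSet_Iic) (hY measurableSet_Iic)).symm), ?_⟩
  simp only [hjoint, hmarginal X hX, hmarginal Y hY, ← map_lq_prod_apply_Iic_prod_Iic]
  exact ⟨Measure.ext_of_Iic_prod_Iic, fun h a b => by rw [h]⟩
end

section
/- For every τ ∈ (0, 1/2], the Expectile Value at Risk EVaR_τ(X) := −e_τ(X) is a coherent measure of risk on integrable random variables: it is monotone, translation invariant, positively homogeneous, and subadditive (equivalently, expectiles are superadditive: e_τ(X) + e_τ(Y) ≤ e_τ(X+Y) for τ ≤ 1/2). -/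
open MeasureTheory

/-- The "expectile defect" function `F_Z(x) = τ E(Z-x)⁺ - (1-τ) E(x-Z)⁺`. -/
noncomputable def expectileDefect {Ω : Type*} [MeasurableSpace Ω] (P : Measure Ω)
    (τ : ℝ) (Z : Ω → ℝ) (x : ℝ) : ℝ :=
  τ * ∫ ω, max (Z ω - x) 0 ∂P - (1 - τ) * ∫ ω, max (x - Z ω) 0 ∂P

lemma expectileDefect_eq {Ω : Type*} [MeasurableSpace Ω] (P : Measure Ω)
    [IsProbabilityMeasure P] (τ : ℝ) {Z : Ω → ℝ} (hZ : Integrable Z P) (x : ℝ) :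
    expectileDefect P τ Z x
      = τ * ((∫ ω, Z ω ∂P) - x) - (1 - 2*τ) * ∫ ω, max (x - Z ω) 0 ∂P := by
  have h1 : ∀ ω, max (Z ω - x) 0 = (Z ω - x) + max (x - Z ω) 0 := by
    intro ω
    rcases le_total (Z ω) x with h | h
    · rw [max_eq_right (by linarith), max_eq_left (by linarith)]; ring
    · rw [max_eq_left (by linarith), max_eq_right (by linarith)]; ring
  have hA : (∫ ω, max (Z ω - x) 0 ∂P)
      = ((∫ ω, Z ω ∂P) - x) + ∫ ω, max (x - Z ω) 0 ∂P := by
    have i1 : Integrable (fun ω => Z ω - x) P := hZ.sub (integrable_const x)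
    have i2 : Integrable (fun ω => max (x - Z ω) 0) P := ((integrable_const x).sub hZ).pos_part
    simp only [h1]
    rw [integral_add i1 i2, integral_sub hZ (integrable_const x)]
    simp
  unfold expectileDefect
  rw [hA]; ring

lemma expectileDefect_strictAnti {Ω : Type*} [MeasurableSpace Ω] (P : Measure Ω)
    [IsProbabilityMeasure P] {τ : ℝ} (hτ0 : 0 < τ) (hτ : τ ≤ 1/2)
    {Z : Ω → ℝ} (hZ : Integrable Z P) {x y : ℝ} (hxy : x < y) :
    expectileDefect P τ Z y < expectileDefect P τ Z x := by
  rw [expectileDefect_eq P τ hZ, expectileDefect_eq P τ hZ]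
  have hB : (∫ ω, max (x - Z ω) 0 ∂P) ≤ ∫ ω, max (y - Z ω) 0 ∂P :=
    integral_mono ((integrable_const x).sub hZ).pos_part ((integrable_const y).sub hZ).pos_part
      (fun ω => max_le_max (by linarith) le_rfl)
  have h2 := mul_le_mul_of_nonneg_left hB (show (0:ℝ) ≤ 1 - 2*τ by linarith)
  have h3 := mul_lt_mul_of_pos_left (show (∫ ω, Z ω ∂P) - y < (∫ ω, Z ω ∂P) - x by linarith) hτ0
  linarith

lemma le_of_expectileDefect {Ω : Type*} [MeasurableSpace Ω] (P : Measure Ω)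
    [IsProbabilityMeasure P] {τ : ℝ} (hτ0 : 0 < τ) (hτ : τ ≤ 1/2)
    {Z : Ω → ℝ} (hZ : Integrable Z P) {x z : ℝ}
    (hx : 0 ≤ expectileDefect P τ Z x) (hz : expectileDefect P τ Z z = 0) : x ≤ z := by
  by_contra h
  have := expectileDefect_strictAnti P hτ0 hτ hZ (show z < x by linarith)
  linarith

/-- Expectile Value at Risk `EVaR_τ(X) := −e_τ(X)` is a coherent measure of risk for
`τ ∈ (0, 1/2]`: monotone, translation invariant, positively homogeneous and subadditive
(equivalently, expectiles are superadditive). -/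
theorem expectile_value_at_risk_coherent {Ω : Type*} [MeasurableSpace Ω]
    (P : Measure Ω) [IsProbabilityMeasure P]
    (τ : ℝ) (hτ0 : 0 < τ) (hτ : τ ≤ 1 / 2)
    (e : (Ω → ℝ) → ℝ)
    -- e Z is the unique solution of the expectile defining equation
    (he : ∀ Z : Ω → ℝ, Integrable Z P →
      (τ * ∫ ω, max (Z ω - e Z) 0 ∂P = (1 - τ) * ∫ ω, max (e Z - Z ω) 0 ∂P) ∧
      (∀ x : ℝ,
        τ * ∫ ω, max (Z ω - x) 0 ∂P = (1 - τ) * ∫ ω, max (x - Z ω) 0 ∂P → x = e Z))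
    (X Y : Ω → ℝ) (hX : Integrable X P) (hY : Integrable Y P) :
    -- monotonicity of EVaR
    ((∀ ω, X ω ≤ Y ω) → -(e Y) ≤ -(e X)) ∧
    -- translation invariance
    (∀ c : ℝ, -(e (fun ω => X ω + c)) = -(e X) - c) ∧
    -- positive homogeneity
    (∀ l : ℝ, 0 ≤ l → -(e (fun ω => l * X ω)) = l * (-(e X))) ∧
    -- subadditivity of EVaR, i.e. superadditivity of expectiles
    (e X + e Y ≤ e (fun ω => X ω + Y ω)) := by
  have hτ' : τ ≤ 1/2 := by linarith
  -- the defect of any integrable Z vanishes at its expectile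
  have hzero : ∀ Z : Ω → ℝ, Integrable Z P → expectileDefect P τ Z (e Z) = 0 := by
    intro Z hZ
    have := (he Z hZ).1
    unfold expectileDefect
    linarith
  refine ⟨?_, ?_, ?_, ?_⟩
  · -- monotonicity
    intro hXY
    have h1 : expectileDefect P τ X (e X) ≤ expectileDefect P τ Y (e X) := by
      unfold expectileDefect
      have hA : (∫ ω, max (X ω - e X) 0 ∂P) ≤ ∫ ω, max (Y ω - e X) 0 ∂P :=
        integral_mono (hX.sub (integrable_const (e X))).pos_part
          (hY.sub (integrable_const (e X))).pos_part
          (fun ω => max_le_max (by linarith [hXY ω]) le_rfl)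
      have hB : (∫ ω, max (e X - Y ω) 0 ∂P) ≤ ∫ ω, max (e X - X ω) 0 ∂P :=
        integral_mono ((integrable_const (e X)).sub hY).pos_part
          ((integrable_const (e X)).sub hX).pos_part
          (fun ω => max_le_max (by linarith [hXY ω]) le_rfl)
      have := mul_le_mul_of_nonneg_left hA hτ0.le
      have := mul_le_mul_of_nonneg_left hB (show (0:ℝ) ≤ 1 - τ by linarith)
      linarith
    have : e X ≤ e Y :=
      le_of_expectileDefect P hτ0 hτ' hY (le_of_eq_of_le (hzero X hX).symm h1) (hzero Y hY)
    linarith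
  · -- translation invariance
    intro c
    have hXc : Integrable (fun ω => X ω + c) P := hX.add (integrable_const c)
    have key : e X + c = e (fun ω => X ω + c) := by
      apply (he (fun ω => X ω + c) hXc).2
      have h1 : ∀ ω, X ω + c - (e X + c) = X ω - e X := fun ω => by ring
      have h2 : ∀ ω, e X + c - (X ω + c) = e X - X ω := fun ω => by ring
      simp only [h1, h2]
      exact (he X hX).1
    linarith
  · -- positive homogeneity
    intro l hl
    rcases eq_or_lt_of_le hl with hl0 | hl0
    · have hlX : Integrable (fun ω => l * X ω) P := hX.const_mul l
      have key : (0:ℝ) = e (fun ω => l * X ω) := by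
        apply (he (fun ω => l * X ω) hlX).2
        simp [← hl0]
      rw [← key, ← hl0]; ring
    · have hlX : Integrable (fun ω => l * X ω) P := hX.const_mul l
      have key : l * e X = e (fun ω => l * X ω) := by
        apply (he (fun ω => l * X ω) hlX).2
        have h1 : ∀ ω, max (l * X ω - l * e X) 0 = l * max (X ω - e X) 0 := by
          intro ω
          rw [← mul_sub, mul_max_of_nonneg _ _ hl, mul_zero]
        have h2 : ∀ ω, max (l * e X - l * X ω) 0 = l * max (e X - X ω) 0 := by
          intro ω
          rw [← mul_sub, mul_max_of_nonneg _ _ hl, mul_zero]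
        simp only [h1, h2, integral_const_mul]
        have := (he X hX).1
        ring_nf
        ring_nf at this
        nlinarith [this]
      rw [← key]; ring
  · -- superadditivity of expectiles
    have hXY : Integrable (fun ω => X ω + Y ω) P := hX.add hY
    apply le_of_expectileDefect P hτ0 hτ' hXY _ (hzero _ hXY)
    rw [expectileDefect_eq P τ hXY]
    have hm : (∫ ω, X ω + Y ω ∂P) = (∫ ω, X ω ∂P) + ∫ ω, Y ω ∂P := integral_add hX hY
    have hBsum : (∫ ω, max (e X + e Y - (X ω + Y ω)) 0 ∂P)
        ≤ (∫ ω, max (e X - X ω) 0 ∂P) + ∫ ω, max (e Y - Y ω) 0 ∂P := by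
      have i1 : Integrable (fun ω => max (e X - X ω) 0) P :=
        ((integrable_const (e X)).sub hX).pos_part
      have i2 : Integrable (fun ω => max (e Y - Y ω) 0) P :=
        ((integrable_const (e Y)).sub hY).pos_part
      rw [← integral_add i1 i2]
      refine integral_mono ((integrable_const (e X + e Y)).sub hXY).pos_part (i1.add i2) ?_
      intro ω
      have h1 : e X + e Y - (X ω + Y ω) = (e X - X ω) + (e Y - Y ω) := by ring
      show max (e X + e Y - (X ω + Y ω)) 0 ≤ max (e X - X ω) 0 + max (e Y - Y ω) 0
      rw [h1]
      exact max_le (add_le_add (le_max_left _ _) (le_max_left _ _)) (add_nonneg (le_max_right _ _) (le_max_right _ _))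
    have hmul := mul_le_mul_of_nonneg_left hBsum (show (0:ℝ) ≤ 1 - 2*τ by linarith)
    have idX := hzero X hX
    have idY := hzero Y hY
    rw [expectileDefect_eq P τ hX] at idX
    rw [expectileDefect_eq P τ hY] at idY
    rw [hm]
    linarith
end
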